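/- If (G,f) is a P-filtered graph and e is a collapsible edge, then for i ∈ {0,1} the persistence modules H_i(G,f) and H_i(G↓e, f) are isomorphic, where G↓e is the simple collapse of G along e. -/

import Mathlib

structure Grph where
  V : Type
  E : Type
  [fintV : Fintype V]
  [fintE : Fintype E]
  [decV : DecidableEq V]
  [decE : DecidableEq E]
  bnd : E → V × V

attribute [instance] Grph.fintV Grph.fintE Grph.decV Grph.decE

/-- boundary map k⟨E⟩ → k⟨V⟩, e ↦ e₁ - e₀ -/
noncomputable def Grph.d (G : Grph) (k : Type) [Field k] :
    (G.E →₀ k) →ₗ[k] (G.V →₀ k) :=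
  Finsupp.linearCombination k fun e =>
    Finsupp.single (G.bnd e).2 1 - Finsupp.single (G.bnd e).1 1

def Grph.adj (G : Grph) (v w : G.V) : Prop :=
  ∃ e, G.bnd e = (v, w) ∨ G.bnd e = (w, v)

structure FGrph (P : Type) [PartialOrder P] extends Grph where
  fV : V → P
  fE : E → P
  mono0 : ∀ e, fV (bnd e).1 ≤ fE e
  mono1 : ∀ e, fV (bnd e).2 ≤ fE e

variable {P : Type} [PartialOrder P]

/-- boundary map of the sublevel graph at grade r -/
noncomputable def FGrph.dr (G : FGrph P) (k : Type) [Field k] (r : P) :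
    ({e : G.E // G.fE e ≤ r} →₀ k) →ₗ[k] ({v : G.V // G.fV v ≤ r} →₀ k) :=
  Finsupp.linearCombination k fun e =>
    Finsupp.single ⟨(G.bnd e.1).2, le_trans (G.mono1 e.1) e.2⟩ 1 -
    Finsupp.single ⟨(G.bnd e.1).1, le_trans (G.mono0 e.1) e.2⟩ 1

noncomputable def FGrph.vmap (G : FGrph P) (k : Type) [Field k] {r s : P} (h : r ≤ s) :
    ({v : G.V // G.fV v ≤ r} →₀ k) →ₗ[k] ({v : G.V // G.fV v ≤ s} →₀ k) :=
  Finsupp.lmapDomain k k fun v => ⟨v.1, le_trans v.2 h⟩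

noncomputable def FGrph.emap (G : FGrph P) (k : Type) [Field k] {r s : P} (h : r ≤ s) :
    ({e : G.E // G.fE e ≤ r} →₀ k) →ₗ[k] ({e : G.E // G.fE e ≤ s} →₀ k) :=
  Finsupp.lmapDomain k k fun e => ⟨e.1, le_trans e.2 h⟩

lemma FGrph.dNat (G : FGrph P) (k : Type) [Field k] {r s : P} (h : r ≤ s) :
    (G.dr k s).comp (G.emap k h) = (G.vmap k h).comp (G.dr k r) := by
  apply Finsupp.lhom_ext
  intro e a
  show (G.dr k s) ((G.emap k h) (Finsupp.single e a)) =
    (G.vmap k h) ((G.dr k r) (Finsupp.single e a))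
  rw [FGrph.emap, Finsupp.lmapDomain_apply, Finsupp.mapDomain_single, FGrph.dr,
    Finsupp.linearCombination_single, FGrph.dr, Finsupp.linearCombination_single,
    map_smul, map_sub, FGrph.vmap, Finsupp.lmapDomain_apply, Finsupp.lmapDomain_apply,
    Finsupp.mapDomain_single, Finsupp.mapDomain_single]

/-- 0-dim homology of the sublevel graph at r -/
noncomputable abbrev FGrph.H0at (G : FGrph P) (k : Type) [Field k] (r : P) :=
  ({v : G.V // G.fV v ≤ r} →₀ k) ⧸ LinearMap.range (G.dr k r)

noncomputable def FGrph.H0map (G : FGrph P) (k : Type) [Field k] {r s : P} (h : r ≤ s) :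
    G.H0at k r →ₗ[k] G.H0at k s :=
  Submodule.mapQ _ _ (G.vmap k h) (by
    rintro x ⟨y, rfl⟩
    exact ⟨G.emap k h y, by
      have := LinearMap.congr_fun (G.dNat k h) y
      simpa using this⟩)

noncomputable abbrev FGrph.H1at (G : FGrph P) (k : Type) [Field k] (r : P) :=
  LinearMap.ker (G.dr k r)

noncomputable def FGrph.H1map (G : FGrph P) (k : Type) [Field k] {r s : P} (h : r ≤ s) :
    G.H1at k r →ₗ[k] G.H1at k s :=
  (G.emap k h).restrict (p := LinearMap.ker (G.dr k r)) (q := LinearMap.ker (G.dr k s))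
    (by
      intro x hx
      have := LinearMap.congr_fun (G.dNat k h) x
      simp only [LinearMap.mem_ker] at hx ⊢
      simp only [LinearMap.coe_comp, Function.comp_apply] at this
      rw [this, hx, map_zero])

def FGrph.adjAt (G : FGrph P) (r : P) (a b : G.V) : Prop :=
  ∃ e, G.fE e ≤ r ∧ (G.bnd e = (a, b) ∨ G.bnd e = (b, a))

def FGrph.connAt (G : FGrph P) (r : P) : G.V → G.V → Prop :=
  Relation.ReflTransGen (G.adjAt r)

def FGrph.pi0At (G : FGrph P) (r : P) :=
  Quot (fun a b : {v : G.V // G.fV v ≤ r} => G.adjAt r a.1 b.1)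

def FGrph.Collapsible (G : FGrph P) (e : G.E) : Prop :=
  (G.bnd e).1 ≠ (G.bnd e).2 ∧
    (G.fE e = G.fV (G.bnd e).1 ∨ G.fE e = G.fV (G.bnd e).2)

def FGrph.delete (G : FGrph P) (e : G.E) : FGrph P where
  V := G.V
  E := {d : G.E // d ≠ e}
  bnd d := G.bnd d.1
  fV := G.fV
  fE d := G.fE d.1
  mono0 d := G.mono0 d.1
  mono1 d := G.mono1 d.1

def FGrph.Deletable (G : FGrph P) (e : G.E) : Prop :=
  (G.delete e).connAt (G.fE e) (G.bnd e).1 (G.bnd e).2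

def FGrph.collapse (G : FGrph P) (e : G.E) (x y : G.V) (hxy : y ≠ x)
    (hf : G.fV y ≤ G.fV x) : FGrph P where
  V := {v : G.V // v ≠ x}
  E := {d : G.E // d ≠ e}
  bnd d :=
    (if h : (G.bnd d.1).1 = x then ⟨y, hxy⟩ else ⟨(G.bnd d.1).1, h⟩,
     if h : (G.bnd d.1).2 = x then ⟨y, hxy⟩ else ⟨(G.bnd d.1).2, h⟩)
  fV v := G.fV v.1
  fE d := G.fE d.1
  mono0 d := by
    dsimp only
    split
    · exact le_trans hf (by rw [← ‹(G.bnd d.1).1 = x›]; exact G.mono0 d.1)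
    · exact G.mono0 d.1
  mono1 d := by
    dsimp only
    split
    · exact le_trans hf (by rw [← ‹(G.bnd d.1).2 = x›]; exact G.mono1 d.1)
    · exact G.mono1 d.1


/-! Collapsing `e` is, at every grade `r`, a deformation retraction of the two-term chain
complex of the sublevel graph onto that of the collapsed graph: on vertices `x ↦ y`, split by the
inclusion; on edges `e ↦ 0`; and the homotopy `x ↦ ∓e` is defined at every grade containing `x`
precisely because `f(e) = f(x)`. A deformation retraction of two-term complexes induces inverse
isomorphisms of cokernels (`H₀`) and of kernels (`H₁`), and since the chain maps commute with the
inclusions of sublevel graphs, these isomorphisms are natural in `r`. -/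

structure TwoTermRetract {R : Type*} [Ring R] {C₁ C₀ D₁ D₀ : Type*}
    [AddCommGroup C₁] [AddCommGroup C₀] [AddCommGroup D₁] [AddCommGroup D₀]
    [Module R C₁] [Module R C₀] [Module R D₁] [Module R D₀]
    (d : C₁ →ₗ[R] C₀) (d' : D₁ →ₗ[R] D₀) where
  φ₀ : C₀ →ₗ[R] D₀
  φ₁ : C₁ →ₗ[R] D₁
  ψ₀ : D₀ →ₗ[R] C₀
  ψ₁ : D₁ →ₗ[R] C₁
  h : C₀ →ₗ[R] C₁
  d_comp_φ₁ : d' ∘ₗ φ₁ = φ₀ ∘ₗ d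
  d_comp_ψ₁ : d ∘ₗ ψ₁ = ψ₀ ∘ₗ d'
  φ₀_comp_ψ₀ : φ₀ ∘ₗ ψ₀ = .id
  φ₁_comp_ψ₁ : φ₁ ∘ₗ ψ₁ = .id
  id_sub_ψ₀_comp_φ₀ : .id - ψ₀ ∘ₗ φ₀ = d ∘ₗ h
  id_sub_ψ₁_comp_φ₁ : .id - ψ₁ ∘ₗ φ₁ = h ∘ₗ d

namespace TwoTermRetract

open LinearMap Submodule

variable {R : Type*} [Ring R] {C₁ C₀ D₁ D₀ : Type*}
  [AddCommGroup C₁] [AddCommGroup C₀] [AddCommGroup D₁] [AddCommGroup D₀]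
  [Module R C₁] [Module R C₀] [Module R D₁] [Module R D₀]
  {d : C₁ →ₗ[R] C₀} {d' : D₁ →ₗ[R] D₀} (ρ : TwoTermRetract d d')

lemma range_le_comap_φ₀ : range d ≤ (range d').comap ρ.φ₀ := by
  rintro _ ⟨c, rfl⟩
  exact ⟨ρ.φ₁ c, LinearMap.congr_fun ρ.d_comp_φ₁ c⟩

lemma range_le_comap_ψ₀ : range d' ≤ (range d).comap ρ.ψ₀ := by
  rintro _ ⟨c, rfl⟩
  exact ⟨ρ.ψ₁ c, LinearMap.congr_fun ρ.d_comp_ψ₁ c⟩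

lemma ker_le_comap_φ₁ : ker d ≤ (ker d').comap ρ.φ₁ := by
  intro c hc
  simp only [mem_comap, mem_ker] at hc ⊢
  rw [← comp_apply, ρ.d_comp_φ₁, comp_apply, hc, map_zero]

lemma ker_le_comap_ψ₁ : ker d' ≤ (ker d).comap ρ.ψ₁ := by
  intro c hc
  simp only [mem_comap, mem_ker] at hc ⊢
  rw [← comp_apply, ρ.d_comp_ψ₁, comp_apply, hc, map_zero]

noncomputable def cokerEquiv : (C₀ ⧸ range d) ≃ₗ[R] (D₀ ⧸ range d') :=
  .ofLinearMap (mapQ _ _ ρ.φ₀ ρ.range_le_comap_φ₀) (mapQ _ _ ρ.ψ₀ ρ.range_le_comap_ψ₀)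
    (by
      ext c
      simp [← comp_apply ρ.φ₀, ρ.φ₀_comp_ψ₀])
    (by
      ext c
      have hc : c - ρ.ψ₀ (ρ.φ₀ c) = d (ρ.h c) := LinearMap.congr_fun ρ.id_sub_ψ₀_comp_φ₀ c
      simp only [comp_apply, mkQ_apply, mapQ_apply, id_apply]
      exact (Submodule.Quotient.eq _).mpr ⟨-ρ.h c, by rw [map_neg, ← hc, neg_sub]⟩)

noncomputable def kerEquiv : ker d ≃ₗ[R] ker d' :=
  .ofLinearMap (ρ.φ₁.restrict ρ.ker_le_comap_φ₁) (ρ.ψ₁.restrict ρ.ker_le_comap_ψ₁)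
    (by
      ext c
      simp [← comp_apply ρ.φ₁, ρ.φ₁_comp_ψ₁])
    (by
      ext ⟨c, hc⟩
      have hc' : c - ρ.ψ₁ (ρ.φ₁ c) = ρ.h (d c) := LinearMap.congr_fun ρ.id_sub_ψ₁_comp_φ₁ c
      rw [mem_ker.mp hc, map_zero, sub_eq_zero] at hc'
      exact hc'.symm)

@[simp]
lemma cokerEquiv_mk (c : C₀) :
    ρ.cokerEquiv (Submodule.Quotient.mk c) = Submodule.Quotient.mk (ρ.φ₀ c) := rfl

variable {C₁' C₀' D₁' D₀' : Type*}
  [AddCommGroup C₁'] [AddCommGroup C₀'] [AddCommGroup D₁'] [AddCommGroup D₀']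
  [Module R C₁'] [Module R C₀'] [Module R D₁'] [Module R D₀']
  {c : C₁' →ₗ[R] C₀'} {c' : D₁' →ₗ[R] D₀'} (ρ' : TwoTermRetract c c')

lemma cokerEquiv_mapQ {α : C₀ →ₗ[R] C₀'} {β : D₀ →ₗ[R] D₀'} (hα : range d ≤ (range c).comap α)
    (hβ : range d' ≤ (range c').comap β) (hφ : ρ'.φ₀ ∘ₗ α = β ∘ₗ ρ.φ₀) (z : C₀ ⧸ range d) :
    ρ'.cokerEquiv (mapQ _ _ α hα z) = mapQ _ _ β hβ (ρ.cokerEquiv z) := by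
  obtain ⟨z, rfl⟩ := Submodule.Quotient.mk_surjective _ z
  simp [← comp_apply ρ'.φ₀, hφ]

lemma kerEquiv_restrict {α : C₁ →ₗ[R] C₁'} {β : D₁ →ₗ[R] D₁'} (hα : ker d ≤ (ker c).comap α)
    (hβ : ker d' ≤ (ker c').comap β) (hφ : ρ'.φ₁ ∘ₗ α = β ∘ₗ ρ.φ₁) (z : ker d) :
    ρ'.kerEquiv (α.restrict hα z) = β.restrict hβ (ρ.kerEquiv z) :=
  Subtype.ext (LinearMap.congr_fun hφ z)

end TwoTermRetract

namespace FGrph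

open Finsupp

variable (k : Type) [Field k]

@[simp]
lemma dr_single {G : FGrph P} {r : P} (d : {d : G.E // G.fE d ≤ r}) (a : k) :
    G.dr k r (single d a) =
      single ⟨(G.bnd d.1).2, (G.mono1 d.1).trans d.2⟩ a -
        single ⟨(G.bnd d.1).1, (G.mono0 d.1).trans d.2⟩ a := by
  simp [dr, smul_sub]

section Collapse

variable {G : FGrph P} (e : G.E) {x y : G.V} (hne : y ≠ x) (hf : G.fV y ≤ G.fV x)
  (hfe : G.fE e = G.fV x) (hbnd : G.bnd e = (x, y) ∨ G.bnd e = (y, x)) {r : P}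

def collapseVertex (v : G.V) : {v : G.V // v ≠ x} :=
  if h : v = x then ⟨y, hne⟩ else ⟨v, h⟩

@[simp]
lemma collapseVertex_self : collapseVertex hne x = ⟨y, hne⟩ := dif_pos rfl

@[simp]
lemma collapseVertex_of_ne {v : G.V} (hvx : v ≠ x) : collapseVertex hne v = ⟨v, hvx⟩ :=
  dif_neg hvx

include hf in
lemma fV_collapseVertex_le (v : G.V) : G.fV (collapseVertex hne v) ≤ G.fV v := by
  unfold collapseVertex
  split_ifs with h
  · exact h ▸ hf
  · exact le_rfl

-- `∂e = edgeSign • (y - x)` whenever `e` joins `x` and `y`, in either orientation.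
variable (x) in
noncomputable def edgeSign : k := if (G.bnd e).1 = x then 1 else -1

variable (r) in
noncomputable def collapseVertexMap :
    ({v : G.V // G.fV v ≤ r} →₀ k) →ₗ[k]
      ({v : (G.collapse e x y hne hf).V // (G.collapse e x y hne hf).fV v ≤ r} →₀ k) :=
  lmapDomain k k fun v => ⟨collapseVertex hne v.1, (fV_collapseVertex_le hne hf v.1).trans v.2⟩

variable (r) in
noncomputable def collapseVertexIncl :
    ({v : (G.collapse e x y hne hf).V // (G.collapse e x y hne hf).fV v ≤ r} →₀ k) →ₗ[k]
      ({v : G.V // G.fV v ≤ r} →₀ k) :=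
  lmapDomain k k fun v => ⟨v.1.1, v.2⟩

variable (r) in
noncomputable def collapseEdgeMap :
    ({d : G.E // G.fE d ≤ r} →₀ k) →ₗ[k]
      ({d : (G.collapse e x y hne hf).E // (G.collapse e x y hne hf).fE d ≤ r} →₀ k) :=
  linearCombination k fun d => if h : d.1 = e then 0 else single ⟨⟨d.1, h⟩, d.2⟩ 1

variable (r) in
noncomputable def collapseEdgeIncl :
    ({d : (G.collapse e x y hne hf).E // (G.collapse e x y hne hf).fE d ≤ r} →₀ k) →ₗ[k]
      ({d : G.E // G.fE d ≤ r} →₀ k) :=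
  lmapDomain k k fun d => ⟨d.1.1, d.2⟩

variable (r) in
noncomputable def collapseHomotopy :
    ({v : G.V // G.fV v ≤ r} →₀ k) →ₗ[k] ({d : G.E // G.fE d ≤ r} →₀ k) :=
  linearCombination k fun v =>
    if h : v.1 = x then -edgeSign k e x • single ⟨e, hfe ▸ h ▸ v.2⟩ 1 else 0

@[simp]
lemma collapseVertexMap_single (v : {v : G.V // G.fV v ≤ r}) (a : k) :
    collapseVertexMap k e hne hf r (single v a) =
      single ⟨collapseVertex hne v.1, (fV_collapseVertex_le hne hf v.1).trans v.2⟩ a := by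
  simp [collapseVertexMap]

@[simp]
lemma collapseVertexIncl_single
    (v : {v : (G.collapse e x y hne hf).V // (G.collapse e x y hne hf).fV v ≤ r}) (a : k) :
    collapseVertexIncl k e hne hf r (single v a) = single ⟨v.1.1, v.2⟩ a := by
  simp [collapseVertexIncl]

@[simp]
lemma collapseEdgeMap_single_self (he : G.fE e ≤ r) (a : k) :
    collapseEdgeMap k e hne hf r (single ⟨e, he⟩ a) = 0 := by
  simp [collapseEdgeMap]

@[simp]
lemma collapseEdgeMap_single_of_ne {d : G.E} (hd : G.fE d ≤ r) (hde : d ≠ e) (a : k) :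
    collapseEdgeMap k e hne hf r (single ⟨d, hd⟩ a) = single ⟨⟨d, hde⟩, hd⟩ a := by
  simp [collapseEdgeMap, hde]

@[simp]
lemma collapseEdgeIncl_single
    (d : {d : (G.collapse e x y hne hf).E // (G.collapse e x y hne hf).fE d ≤ r}) (a : k) :
    collapseEdgeIncl k e hne hf r (single d a) = single ⟨d.1.1, d.2⟩ a := by
  simp [collapseEdgeIncl]

@[simp]
lemma collapseHomotopy_single_self (hx : G.fV x ≤ r) (a : k) :
    collapseHomotopy k e hfe r (single ⟨x, hx⟩ a) =
      single ⟨e, hfe ▸ hx⟩ (-(a * edgeSign k e x)) := by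
  simp [collapseHomotopy]

@[simp]
lemma collapseHomotopy_single_of_ne {v : G.V} (hv : G.fV v ≤ r) (hvx : v ≠ x) (a : k) :
    collapseHomotopy k e hfe r (single ⟨v, hv⟩ a) = 0 := by
  simp [collapseHomotopy, hvx]

variable (r) in
noncomputable def collapseEdgeLift :
    ({d : (G.collapse e x y hne hf).E // (G.collapse e x y hne hf).fE d ≤ r} →₀ k) →ₗ[k]
      ({d : G.E // G.fE d ≤ r} →₀ k) :=
  (LinearMap.id - collapseHomotopy k e hfe r ∘ₗ G.dr k r) ∘ₗ collapseEdgeIncl k e hne hf r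

lemma collapseEdgeMap_comp_collapseEdgeIncl :
    collapseEdgeMap k e hne hf r ∘ₗ collapseEdgeIncl k e hne hf r = .id := by
  ext ⟨⟨d, hd⟩, _⟩ : 2
  simp only [LinearMap.comp_apply, lsingle_apply, collapseEdgeIncl_single]
  exact collapseEdgeMap_single_of_ne k e hne hf _ hd 1

lemma collapseEdgeMap_comp_collapseHomotopy :
    collapseEdgeMap k e hne hf r ∘ₗ collapseHomotopy k e hfe r = 0 := by
  ext ⟨v, hv⟩ : 2
  by_cases hvx : v = x
  · subst hvx
    simp
  · simp [hvx]

lemma collapseVertexMap_comp_collapseVertexIncl :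
    collapseVertexMap k e hne hf r ∘ₗ collapseVertexIncl k e hne hf r = .id := by
  ext ⟨⟨v, hv⟩, _⟩ : 2
  simp [hv]

include hbnd in
lemma collapse_dr_comp_collapseEdgeMap :
    (G.collapse e x y hne hf).dr k r ∘ₗ collapseEdgeMap k e hne hf r =
      collapseVertexMap k e hne hf r ∘ₗ G.dr k r := by
  ext ⟨d, hd⟩ : 2
  by_cases hde : d = e
  · subst hde
    rcases hbnd with h | h <;> simp [h, hne]
  · -- the boundary in `G.collapse` is `collapseVertex` applied to the endpoints in `G`
    simp [hde]
    rfl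

include hbnd in
lemma id_sub_collapseVertexIncl_comp_collapseVertexMap :
    .id - collapseVertexIncl k e hne hf r ∘ₗ collapseVertexMap k e hne hf r =
      G.dr k r ∘ₗ collapseHomotopy k e hfe r := by
  ext ⟨v, hv⟩ : 2
  by_cases hvx : v = x
  · subst hvx
    rcases hbnd with h | h <;> simp [edgeSign, h, hne]
  · simp [hvx]

include hbnd in
lemma id_sub_collapseEdgeLift_comp_collapseEdgeMap :
    .id - collapseEdgeLift k e hne hf hfe r ∘ₗ collapseEdgeMap k e hne hf r =
      collapseHomotopy k e hfe r ∘ₗ G.dr k r := by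
  ext ⟨d, hd⟩ : 2
  by_cases hde : d = e
  · subst hde
    rcases hbnd with h | h <;> simp [edgeSign, h, hne]
  · simp [collapseEdgeLift, hde]

include hbnd in
lemma dr_comp_collapseEdgeLift :
    G.dr k r ∘ₗ collapseEdgeLift k e hne hf hfe r =
      collapseVertexIncl k e hne hf r ∘ₗ (G.collapse e x y hne hf).dr k r := by
  refine LinearMap.ext fun c => ?_
  let ιc := collapseEdgeIncl k e hne hf r c
  have hV := LinearMap.congr_fun
    (id_sub_collapseVertexIncl_comp_collapseVertexMap k e hne hf hfe hbnd) (G.dr k r ιc)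
  have hφ := LinearMap.congr_fun (collapse_dr_comp_collapseEdgeMap k e hne hf hbnd) ιc
  have hι := LinearMap.congr_fun (collapseEdgeMap_comp_collapseEdgeIncl k e hne hf (r := r)) c
  simp only [LinearMap.comp_apply, LinearMap.sub_apply, LinearMap.id_apply] at hV hφ hι
  calc G.dr k r (collapseEdgeLift k e hne hf hfe r c)
      = G.dr k r ιc - G.dr k r (collapseHomotopy k e hfe r (G.dr k r ιc)) := by
        simp [collapseEdgeLift, ιc]
    _ = collapseVertexIncl k e hne hf r (collapseVertexMap k e hne hf r (G.dr k r ιc)) := by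
        rw [← hV, sub_sub_cancel]
    _ = collapseVertexIncl k e hne hf r ((G.collapse e x y hne hf).dr k r c) := by
        rw [← hφ, hι]

lemma collapseEdgeMap_comp_collapseEdgeLift :
    collapseEdgeMap k e hne hf r ∘ₗ collapseEdgeLift k e hne hf hfe r = .id := by
  refine LinearMap.ext fun c => ?_
  have hh := LinearMap.congr_fun (collapseEdgeMap_comp_collapseHomotopy k e hne hf hfe (r := r))
    (G.dr k r (collapseEdgeIncl k e hne hf r c))
  have hι := LinearMap.congr_fun (collapseEdgeMap_comp_collapseEdgeIncl k e hne hf (r := r)) c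
  simp only [LinearMap.comp_apply, LinearMap.zero_apply, LinearMap.id_apply] at hh hι ⊢
  rw [collapseEdgeLift, LinearMap.comp_apply, LinearMap.sub_apply, LinearMap.id_apply, map_sub,
    LinearMap.comp_apply, hh, hι, sub_zero]

variable (r) in
noncomputable def collapseRetract :
    TwoTermRetract (G.dr k r) ((G.collapse e x y hne hf).dr k r) where
  φ₀ := collapseVertexMap k e hne hf r
  φ₁ := collapseEdgeMap k e hne hf r
  ψ₀ := collapseVertexIncl k e hne hf r
  ψ₁ := collapseEdgeLift k e hne hf hfe r
  h := collapseHomotopy k e hfe r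
  d_comp_φ₁ := collapse_dr_comp_collapseEdgeMap k e hne hf hbnd
  d_comp_ψ₁ := dr_comp_collapseEdgeLift k e hne hf hfe hbnd
  φ₀_comp_ψ₀ := collapseVertexMap_comp_collapseVertexIncl k e hne hf
  φ₁_comp_ψ₁ := collapseEdgeMap_comp_collapseEdgeLift k e hne hf hfe
  id_sub_ψ₀_comp_φ₀ := id_sub_collapseVertexIncl_comp_collapseVertexMap k e hne hf hfe hbnd
  id_sub_ψ₁_comp_φ₁ := id_sub_collapseEdgeLift_comp_collapseEdgeMap k e hne hf hfe hbnd

lemma collapseVertexMap_comp_vmap {r s : P} (h : r ≤ s) :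
    collapseVertexMap k e hne hf s ∘ₗ G.vmap k h =
      (G.collapse e x y hne hf).vmap k h ∘ₗ collapseVertexMap k e hne hf r := by
  ext v : 2
  simp [vmap]

lemma collapseEdgeMap_comp_emap {r s : P} (h : r ≤ s) :
    collapseEdgeMap k e hne hf s ∘ₗ G.emap k h =
      (G.collapse e x y hne hf).emap k h ∘ₗ collapseEdgeMap k e hne hf r := by
  ext ⟨d, hd⟩ : 2
  by_cases hde : d = e
  · subst hde
    simp [emap]
  · simp only [LinearMap.comp_apply, lsingle_apply, emap, lmapDomain_apply, mapDomain_single]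
    rw [collapseEdgeMap_single_of_ne k e hne hf _ hde,
      collapseEdgeMap_single_of_ne k e hne hf _ hde, mapDomain_single]

end Collapse

end FGrph

/-- if `e` is a collapsible edge (with `f(e) = f(x)` and removed endpoint
`x`, kept endpoint `y`), then `H_i(G,f) ≅ H_i(G↓e, f)` for `i ∈ {0,1}` as persistence
modules: there are families of linear equivalences at each grade, commuting with the
structure maps. -/
theorem homology_invariance_of_collapse (k : Type) [Field k] (G : FGrph P) (e : G.E)
    (x y : G.V) (hne : y ≠ x)
    (hbnd : G.bnd e = (x, y) ∨ G.bnd e = (y, x)) (hfe : G.fE e = G.fV x)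
    (hf : G.fV y ≤ G.fV x) :
    (∃ ε0 : ∀ r : P, G.H0at k r ≃ₗ[k] (G.collapse e x y hne hf).H0at k r,
      ∀ {r s : P} (h : r ≤ s) (z : G.H0at k r),
        ε0 s (G.H0map k h z) = (G.collapse e x y hne hf).H0map k h (ε0 r z)) ∧
    (∃ ε1 : ∀ r : P, G.H1at k r ≃ₗ[k] (G.collapse e x y hne hf).H1at k r,
      ∀ {r s : P} (h : r ≤ s) (z : G.H1at k r),
        ε1 s (G.H1map k h z) = (G.collapse e x y hne hf).H1map k h (ε1 r z)) := by
  let ρ r := FGrph.collapseRetract k e hne hf hfe hbnd r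
  exact ⟨⟨fun r => (ρ r).cokerEquiv, fun h z =>
      TwoTermRetract.cokerEquiv_mapQ _ _ _ _ (FGrph.collapseVertexMap_comp_vmap k e hne hf h) z⟩,
    ⟨fun r => (ρ r).kerEquiv, fun h z =>
      TwoTermRetract.kerEquiv_restrict _ _ _ _ (FGrph.collapseEdgeMap_comp_emap k e hne hf h) z⟩⟩
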